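/- Let 0 < a < 1 and r > r_0 = 2/(1-a). Define ḡ(x) = (1-x)(x-a) + (1 - f(x))(f(x) - a) where f(x) = x·e^{r(1-x)(x-a)}. Then ḡ(a) = ḡ(1) = 0, ḡ'(a) = (1-a)(2 + ra(1-a)) > 0, and ḡ'(1) = (a-1)(2 + r(a-1)) > 0; consequently ḡ has a zero in (a,1) and a zero in (1,∞), so f has a positive 2-cycle {x̄₁, x̄₂} with a < x̄₁ < 1 < x̄₂. -/

import Mathlib

/-!
Write `G x = (1 - x) (x - a)`, so that `f x = x exp (r G x)` and `ḡ = G + G ∘ f`. Then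
`f (f x) = x exp (r ḡ x)`, hence every zero of `ḡ` is a point of period two of `f`, and `ḡ` is
symmetric along the orbit: `ḡ (f x) = ḡ x` whenever `f (f x) = x`. Both fixed points `a` and `1`
are zeros of `ḡ` with positive slope once `r (1 - a) > 2`, so `ḡ` changes sign from `+` to `-` in
between and has a zero `x̄₁ ∈ (a, 1)`. There `G > 0`, so `x̄₂ = f x̄₁ > x̄₁ > a`, and
`G x̄₂ = -G x̄₁ < 0` forces `x̄₂ > 1`.
-/

open Real Set Filter Topology

theorem exists_mem_Ioo_eq_zero_of_deriv_pos {g : ℝ → ℝ} {p q : ℝ} (hpq : p < q)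
    (hg : ContinuousOn g (Icc p q)) (hp : g p = 0) (hq : g q = 0)
    (hp' : 0 < deriv g p) (hq' : 0 < deriv g q) : ∃ c ∈ Ioo p q, g c = 0 := by
  obtain ⟨y₀, hgy₀, hy₀⟩ : ∃ y, 0 < g y ∧ y ∈ Ioo p q := by
    refine Eventually.exists (f := 𝓝[>] p) ?_
    filter_upwards [nhdsWithin_le_nhds (eventually_nhdsWithin_sign_eq_of_deriv_pos hp' hp),
      Ioo_mem_nhdsGT hpq] with x hsign hx
    rw [sign_pos (sub_pos.mpr hx.1), sign_eq_one_iff] at hsign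
    exact ⟨hsign, hx⟩
  obtain ⟨y₁, hgy₁, hy₁⟩ : ∃ y, g y < 0 ∧ y ∈ Ioo y₀ q := by
    refine Eventually.exists (f := 𝓝[<] q) ?_
    filter_upwards [nhdsWithin_le_nhds (eventually_nhdsWithin_sign_eq_of_deriv_pos hq' hq),
      Ioo_mem_nhdsLT hy₀.2] with x hsign hx
    rw [sign_neg (sub_neg.mpr hx.2), sign_eq_neg_one_iff] at hsign
    exact ⟨hsign, hx⟩
  obtain ⟨c, hc, hgc⟩ := intermediate_value_Ioo' hy₁.1.le
    (hg.mono (Icc_subset_Icc hy₀.1.le hy₁.2.le)) ⟨hgy₁, hgy₀⟩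
  exact ⟨c, ⟨hy₀.1.trans hc.1, hc.2.trans hy₁.2⟩, hgc⟩

noncomputable section

def alleeGrowth (a x : ℝ) : ℝ := (1 - x) * (x - a)

def alleeRicker (a r x : ℝ) : ℝ := x * exp (r * alleeGrowth a x)

def twoStepGrowth (a r x : ℝ) : ℝ := alleeGrowth a x + alleeGrowth a (alleeRicker a r x)

variable {a r : ℝ}

theorem hasDerivAt_alleeGrowth (a x : ℝ) : HasDerivAt (alleeGrowth a) (1 + a - 2 * x) x := by
  have := ((hasDerivAt_id x).const_sub 1).mul ((hasDerivAt_id x).sub_const a)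
  exact this.congr_deriv (by simp only [id]; ring)

theorem hasDerivAt_alleeRicker (a r x : ℝ) :
    HasDerivAt (alleeRicker a r)
      (exp (r * alleeGrowth a x) * (1 + x * r * (1 + a - 2 * x))) x := by
  have := (hasDerivAt_id x).mul (((hasDerivAt_alleeGrowth a x).const_mul r).exp)
  exact this.congr_deriv (by simp only [id]; ring)

theorem alleeRicker_of_alleeGrowth_eq_zero {x : ℝ} (h : alleeGrowth a x = 0) :
    alleeRicker a r x = x := by
  simp [alleeRicker, h]

theorem alleeRicker_alleeRicker (x : ℝ) :
    alleeRicker a r (alleeRicker a r x) = x * exp (r * twoStepGrowth a r x) := by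
  conv_lhs => rw [alleeRicker, alleeRicker]
  rw [mul_assoc, ← exp_add, twoStepGrowth, ← alleeRicker, mul_add]

theorem continuous_twoStepGrowth : Continuous (twoStepGrowth a r) := by
  unfold twoStepGrowth alleeRicker alleeGrowth
  fun_prop

theorem deriv_twoStepGrowth_of_alleeGrowth_eq_zero {p : ℝ} (h : alleeGrowth a p = 0) :
    deriv (twoStepGrowth a r) p = (1 + a - 2 * p) * (2 + r * p * (1 + a - 2 * p)) := by
  have hfix := alleeRicker_of_alleeGrowth_eq_zero (r := r) h
  have hcomp := (hasDerivAt_alleeGrowth a (alleeRicker a r p)).comp p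
    (hasDerivAt_alleeRicker a r p)
  rw [hfix] at hcomp
  refine ((hasDerivAt_alleeGrowth a p).add hcomp).deriv.trans ?_
  simp only [h, mul_zero, exp_zero]
  ring

theorem lt_alleeRicker {x : ℝ} (hx : 0 < x) (hr : 0 < r) (hG : 0 < alleeGrowth a x) :
    x < alleeRicker a r x :=
  lt_mul_of_one_lt_right hx (one_lt_exp_iff.mpr (mul_pos hr hG))

theorem alleeRicker_alleeRicker_of_twoStepGrowth_eq_zero {x : ℝ} (h : twoStepGrowth a r x = 0) :
    alleeRicker a r (alleeRicker a r x) = x := by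
  rw [alleeRicker_alleeRicker, h, mul_zero, exp_zero, mul_one]

theorem twoStepGrowth_alleeRicker_of_twoStepGrowth_eq_zero {x : ℝ}
    (h : twoStepGrowth a r x = 0) : twoStepGrowth a r (alleeRicker a r x) = 0 := by
  rw [twoStepGrowth, alleeRicker_alleeRicker_of_twoStepGrowth_eq_zero h, add_comm]
  exact h

theorem one_lt_alleeRicker_of_twoStepGrowth_eq_zero (ha : 0 < a) (hr : 0 < r) {x : ℝ}
    (hx : x ∈ Ioo a 1) (h : twoStepGrowth a r x = 0) : 1 < alleeRicker a r x := by
  have hG : 0 < alleeGrowth a x := mul_pos (sub_pos.2 hx.2) (sub_pos.2 hx.1)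
  have hax : a < alleeRicker a r x := hx.1.trans (lt_alleeRicker (ha.trans hx.1) hr hG)
  have hGf : alleeGrowth a (alleeRicker a r x) < 0 := by
    rw [twoStepGrowth] at h
    linarith
  by_contra! hle
  exact hGf.not_ge (mul_nonneg (sub_nonneg.2 hle) (sub_pos.2 hax).le)

end

theorem stmt_11 (a r : ℝ) (ha : 0 < a) (ha1 : a < 1) (hr : 2 / (1 - a) < r)
    (f : ℝ → ℝ) (hf : f = fun x => x * Real.exp (r * (1 - x) * (x - a)))
    (g : ℝ → ℝ) (hg : g = fun x => (1 - x) * (x - a) + (1 - f x) * (f x - a)) :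
    g a = 0 ∧ g 1 = 0 ∧
    deriv g a = (1 - a) * (2 + r * a * (1 - a)) ∧ 0 < deriv g a ∧
    deriv g 1 = (a - 1) * (2 + r * (a - 1)) ∧ 0 < deriv g 1 ∧
    ∃ x1 ∈ Set.Ioo a 1, ∃ x2 ∈ Set.Ioi (1 : ℝ),
      g x1 = 0 ∧ g x2 = 0 ∧ f x1 = x2 ∧ f x2 = x1 := by
  obtain rfl : f = alleeRicker a r := by
    rw [hf]
    funext x
    rw [alleeRicker, alleeGrowth, mul_assoc]
  obtain rfl : g = twoStepGrowth a r := hg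
  have h1a : 0 < 1 - a := sub_pos.2 ha1
  have hr2 : 2 < r * (1 - a) := (div_lt_iff₀ h1a).mp hr
  have hr0 : 0 < r := (div_pos two_pos h1a).trans hr
  have hGa : alleeGrowth a a = 0 := by simp [alleeGrowth]
  have hG1 : alleeGrowth a 1 = 0 := by simp [alleeGrowth]
  have hga : twoStepGrowth a r a = 0 := by
    simp [twoStepGrowth, alleeRicker_of_alleeGrowth_eq_zero hGa, hGa]
  have hg1 : twoStepGrowth a r 1 = 0 := by
    simp [twoStepGrowth, alleeRicker_of_alleeGrowth_eq_zero hG1, hG1]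
  have hda : deriv (twoStepGrowth a r) a = (1 - a) * (2 + r * a * (1 - a)) := by
    rw [deriv_twoStepGrowth_of_alleeGrowth_eq_zero hGa]; ring
  have hd1 : deriv (twoStepGrowth a r) 1 = (a - 1) * (2 + r * (a - 1)) := by
    rw [deriv_twoStepGrowth_of_alleeGrowth_eq_zero hG1]; ring
  have hda_pos : 0 < deriv (twoStepGrowth a r) a := hda ▸ mul_pos h1a (by positivity)
  have hd1_pos : 0 < deriv (twoStepGrowth a r) 1 := hd1 ▸ mul_pos_of_neg_of_neg (by linarith)
    (by linarith)
  obtain ⟨c, hc, hgc⟩ := exists_mem_Ioo_eq_zero_of_deriv_pos ha1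
    continuous_twoStepGrowth.continuousOn hga hg1 hda_pos hd1_pos
  exact ⟨hga, hg1, hda, hda_pos, hd1, hd1_pos, c, hc, alleeRicker a r c,
    one_lt_alleeRicker_of_twoStepGrowth_eq_zero ha hr0 hc hgc, hgc,
    twoStepGrowth_alleeRicker_of_twoStepGrowth_eq_zero hgc, rfl,
    alleeRicker_alleeRicker_of_twoStepGrowth_eq_zero hgc⟩
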